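/- Let A be a countable alphabet, P a probability distribution on A, and D a proper and almost surely complete dictionary over A. Then for every positive integer m, ∑_{α∈D, |α|≥m} P(α)|α| ≥ ∑_{β ∈ D_m^⊥} P(β)|β|, where D_m^⊥ = {α ∈ D : |α| = m} ∪ T_m and T_m = {α ∈ A^m : no β ∈ D is a prefix of α}, with all sums taken in [0,∞]. -/

import Mathlib

open scoped ENNReal
open Filter

/-- The probability of a finite string, obtained by extending the
distribution `P` multiplicatively: `P(a₁⋯aₙ) = ∏ᵢ P(aᵢ)`. -/
noncomputable def strProb {A : Type*} (P : PMF A) (l : List A) : ℝ≥0∞ :=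
  (l.map fun a => P a).prod

/-- A dictionary is a set of nonempty finite strings. -/
def IsDictionary {A : Type*} (D : Set (List A)) : Prop :=
  ∀ α ∈ D, α ≠ []

/-- A dictionary is proper if no string in it is a (proper) prefix of
another string in it. -/
def IsProper {A : Type*} (D : Set (List A)) : Prop :=
  ∀ α ∈ D, ∀ β ∈ D, α <+: β → α = β

/-- A dictionary is complete if every infinite sequence over `A` has a
prefix in it. -/
def IsCompleteDict {A : Type*} (D : Set (List A)) : Prop :=
  ∀ x : ℕ → A, ∃ α ∈ D, α = (List.range α.length).map x

/-- The probability that the length-`n` prefix of a random infinite sequence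
has some prefix belonging to `D`. -/
noncomputable def prefixProb {A : Type*} (P : PMF A) (D : Set (List A)) (n : ℕ) : ℝ≥0∞ :=
  ∑' γ : {γ : List A // γ.length = n ∧ ∃ β ∈ D, β <+: γ}, strProb P γ

/-- `D` is almost surely complete: under the infinite product measure `P^ℕ`,
the event that an infinite sequence has a prefix in `D` has probability `1`.
(By continuity from below, this probability is the limit, as `n → ∞`, of the
probability that the length-`n` prefix has a prefix in `D`.) -/
def IsASC {A : Type*} (P : PMF A) (D : Set (List A)) : Prop :=
  Tendsto (prefixProb P D) atTop (nhds 1)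

/-- `Tset D n` = strings of length `n` having no prefix in `D`. -/
def Tset {A : Type*} (D : Set (List A)) (n : ℕ) : Set (List A) :=
  {α | α.length = n ∧ ∀ β ∈ D, ¬ β <+: α}

/-- `Dperp D n = {α ∈ D : |α| = n} ∪ Tₙ`. -/
def Dperp {A : Type*} (D : Set (List A)) (n : ℕ) : Set (List A) :=
  {α ∈ D | α.length = n} ∪ Tset D n

/-- `Dn D n = {α ∈ D : |α| < n} ∪ Dₙ^⊥`. -/
def Dn {A : Type*} (D : Set (List A)) (n : ℕ) : Set (List A) :=
  {α ∈ D | α.length < n} ∪ Dperp D n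

/-- The one-letter extensions `αA = {αa : a ∈ A}` of a string `α`. -/
def oneExt {A : Type*} (α : List A) : Set (List A) :=
  {l | ∃ a : A, l = α ++ [a]}

/-- The extension `D[α] = (D \ {α}) ∪ αA` of a dictionary at `α`. -/
def extendDict {A : Type*} (D : Set (List A)) (α : List A) : Set (List A) :=
  (D \ {α}) ∪ oneExt α

/-- The nonnegative entropy contribution `-p log₂ p ∈ [0,∞]` of a
probability value `p`. -/
noncomputable def entTerm (p : ℝ≥0∞) : ℝ≥0∞ :=
  ENNReal.ofReal (-(p.toReal * Real.logb 2 p.toReal))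

/-- The entropy `H(E) = -∑_{α∈E} P(α) log₂ P(α)` of a dictionary, in `[0,∞]`. -/
noncomputable def dictEntropy {A : Type*} (P : PMF A) (E : Set (List A)) : ℝ≥0∞ :=
  ∑' α : E, entTerm (strProb P α)

/-- The average length `l̄(E) = ∑_{α∈E} P(α)|α|` of a dictionary, in `[0,∞]`. -/
noncomputable def avgLen {A : Type*} (P : PMF A) (E : Set (List A)) : ℝ≥0∞ :=
  ∑' α : E, strProb P α * (α : List A).length

/-- The source entropy `H(P) = -∑_{a∈A} P(a) log₂ P(a)`, in `[0,∞]`. -/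
noncomputable def srcEntropy {A : Type*} (P : PMF A) : ℝ≥0∞ :=
  ∑' a : A, entTerm (P a)

/-!
Fix `β ∈ Tₘ` and `n ≥ m`. A length-`n` extension of `β` either has a prefix in `D`, which must
itself extend `β` because `β` has none, or lies in `Tₙ`; hence `P(β) ≤ P{α ∈ D : β ⊑ α} + P(Tₙ)`,
and `P(Tₙ) → 0` is almost sure completeness. For distinct `β ∈ Tₘ` the sets `{α ∈ D : β ⊑ α}` are
disjoint and contain only words longer than `m`, so summing over `β` gives
`P(Dₘ^⊥) ≤ P{α ∈ D : |α| ≥ m}`. Every word of `Dₘ^⊥` has length `m`, and multiplying by `m` gives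
the claim.
-/

open Set Filter Topology

section StringMass

variable {A : Type*} (P : PMF A)

noncomputable def strMass (S : Set (List A)) : ℝ≥0∞ :=
  ∑' γ : S, strProb P γ

lemma strMass_mono {S T : Set (List A)} (h : S ⊆ T) : strMass P S ≤ strMass P T :=
  ENNReal.tsum_mono_subtype _ h

lemma strMass_union_le (S T : Set (List A)) :
    strMass P (S ∪ T) ≤ strMass P S + strMass P T :=
  ENNReal.tsum_union_le _ S T

lemma strMass_union {S T : Set (List A)} (h : Disjoint S T) :
    strMass P (S ∪ T) = strMass P S + strMass P T :=
  ENNReal.summable.tsum_union_disjoint h ENNReal.summable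

lemma strProb_append (l₁ l₂ : List A) :
    strProb P (l₁ ++ l₂) = strProb P l₁ * strProb P l₂ := by
  simp [strProb]

def consEquiv (n : ℕ) :
    A × {γ : List A // γ.length = n} ≃ {γ : List A | γ.length = n + 1} where
  toFun p := ⟨p.1 :: p.2.1, by simp [p.2.2]⟩
  invFun γ := (γ.1.head (List.ne_nil_of_length_eq_add_one γ.2),
    ⟨γ.1.tail, by simp [show γ.1.length = n + 1 from γ.2]⟩)
  left_inv _ := rfl
  right_inv γ := Subtype.ext (List.cons_head_tail _)

lemma strMass_length_eq (n : ℕ) : strMass P {γ | γ.length = n} = 1 := by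
  induction n with
  | zero =>
    rw [strMass, tsum_eq_single (⟨[], rfl⟩ : {γ : List A | γ.length = 0})]
    · simp [strProb]
    · rintro ⟨l, hl⟩ hne
      exact absurd (Subtype.ext (List.length_eq_zero_iff.mp hl)) hne
  | succ n ih =>
    calc strMass P {γ | γ.length = n + 1}
        = ∑' p : A × {γ : List A // γ.length = n}, P p.1 * strProb P p.2.1 :=
          ((consEquiv n).tsum_eq fun γ => strProb P γ.1).symm
      _ = ∑' a, P a * strMass P {γ | γ.length = n} :=
          (ENNReal.tsum_prod (f := fun a (l : {γ : List A // γ.length = n}) =>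
            P a * strProb P l.1)).trans (tsum_congr fun a => ENNReal.tsum_mul_left)
      _ = 1 := by simp [ih]

def appendEquiv (α : List A) (k : ℕ) :
    {δ : List A // δ.length = k} ≃ {γ : List A | γ.length = α.length + k ∧ α <+: γ} where
  toFun δ := ⟨α ++ δ.1, by simp [δ.2], List.prefix_append _ _⟩
  invFun γ := ⟨γ.1.drop α.length, by simp [γ.2.1]⟩
  left_inv _ := Subtype.ext List.drop_left
  right_inv γ := Subtype.ext <| by
    obtain ⟨δ, hδ⟩ := γ.2.2
    simp [← hδ]

lemma strMass_cylinder (α : List A) (k : ℕ) :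
    strMass P {γ | γ.length = α.length + k ∧ α <+: γ} = strProb P α :=
  calc strMass P {γ | γ.length = α.length + k ∧ α <+: γ}
      = ∑' δ : {δ : List A // δ.length = k}, strProb P α * strProb P δ.1 := by
        rw [strMass, ← (appendEquiv α k).tsum_eq]
        exact tsum_congr fun δ => strProb_append P α δ.1
    _ = strProb P α * strMass P {δ | δ.length = k} := ENNReal.tsum_mul_left
    _ = strProb P α := by rw [strMass_length_eq, mul_one]

lemma strMass_cylinder_le (α : List A) (n : ℕ) :
    strMass P {γ | γ.length = n ∧ α <+: γ} ≤ strProb P α := by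
  obtain ⟨k, rfl⟩ | hn := le_or_gt α.length n |>.imp Nat.exists_eq_add_of_le id
  · exact (strMass_cylinder P α k).le
  · have hempty : {γ : List A | γ.length = n ∧ α <+: γ} = ∅ :=
      eq_empty_of_forall_notMem fun γ ⟨hγ, hαγ⟩ => hn.not_ge (hγ ▸ hαγ.length_le)
    simp [hempty, strMass]

end StringMass

section Dictionary

variable {A : Type*} (P : PMF A) {D : Set (List A)}

lemma strMass_Tset_add_prefixProb (n : ℕ) :
    strMass P (Tset D n) + prefixProb P D n = 1 := by
  have hsplit : Tset D n ∪ {γ | γ.length = n ∧ ∃ β ∈ D, β <+: γ} = {γ | γ.length = n} := by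
    ext γ
    simp only [Tset, mem_union, mem_ofPred_eq, ← and_or_left, and_iff_left_iff_imp]
    intro _
    by_cases hpre : ∃ β ∈ D, β <+: γ
    exacts [Or.inr hpre, Or.inl fun β hβD hβγ => hpre ⟨β, hβD, hβγ⟩]
  have hdisj : Disjoint (Tset D n) {γ | γ.length = n ∧ ∃ β ∈ D, β <+: γ} :=
    disjoint_left.mpr fun γ ⟨_, hT⟩ ⟨_, β, hβD, hβγ⟩ => hT β hβD hβγ
  rw [← strMass_length_eq P n, ← hsplit, strMass_union P hdisj]
  rfl

lemma IsASC.tendsto_strMass_Tset (hasc : IsASC P D) :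
    Tendsto (fun n => strMass P (Tset D n)) atTop (𝓝 0) := by
  have hT : ∀ n, strMass P (Tset D n) = 1 - prefixProb P D n := fun n =>
    ENNReal.eq_sub_of_add_eq (ne_top_of_le_ne_top ENNReal.one_ne_top
      (le_of_add_le_right (strMass_Tset_add_prefixProb P n).le))
      (strMass_Tset_add_prefixProb P n)
  simpa [hT] using ENNReal.Tendsto.sub tendsto_const_nhds hasc (Or.inl ENNReal.one_ne_top)

lemma strProb_le_strMass_extensions_add {m : ℕ} {β : List A} (hβ : β ∈ Tset D m) (k : ℕ) :
    strProb P β ≤ strMass P {α | α ∈ D ∧ β <+: α} + strMass P (Tset D (m + k)) := by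
  set E := {α | α ∈ D ∧ β <+: α}
  have hcover : {γ | γ.length = β.length + k ∧ β <+: γ} ⊆
      (⋃ α ∈ E, {γ | γ.length = m + k ∧ α <+: γ}) ∪ Tset D (m + k) := by
    rintro γ ⟨hγ, hβγ⟩
    rw [hβ.1] at hγ
    by_cases hpre : ∃ α ∈ D, α <+: γ
    · obtain ⟨α, hαD, hαγ⟩ := hpre
      have hβα : β <+: α := (List.prefix_or_prefix_of_prefix hβγ hαγ).resolve_right (hβ.2 α hαD)
      exact Or.inl (mem_biUnion ⟨hαD, hβα⟩ ⟨hγ, hαγ⟩)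
    · exact Or.inr ⟨hγ, fun α hαD hαγ => hpre ⟨α, hαD, hαγ⟩⟩
  calc strProb P β = strMass P {γ | γ.length = β.length + k ∧ β <+: γ} :=
        (strMass_cylinder P β k).symm
    _ ≤ strMass P (⋃ α ∈ E, {γ | γ.length = m + k ∧ α <+: γ}) + strMass P (Tset D (m + k)) :=
        (strMass_mono P hcover).trans (strMass_union_le P _ _)
    _ ≤ strMass P E + strMass P (Tset D (m + k)) := by
        gcongr
        exact (ENNReal.tsum_biUnion_le_tsum _ E _).trans
          (ENNReal.tsum_le_tsum fun α => strMass_cylinder_le P α.1 (m + k))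

lemma strProb_le_strMass_extensions (hasc : IsASC P D) {m : ℕ} {β : List A}
    (hβ : β ∈ Tset D m) : strProb P β ≤ strMass P {α | α ∈ D ∧ β <+: α} := by
  have hlim : Tendsto (fun k => strMass P {α | α ∈ D ∧ β <+: α} + strMass P (Tset D (m + k)))
      atTop (𝓝 (strMass P {α | α ∈ D ∧ β <+: α})) := by
    simpa only [add_zero, Function.comp_def, id] using tendsto_const_nhds.add
      ((hasc.tendsto_strMass_Tset P).comp (strictMono_id.const_add m).tendsto_atTop)
  exact ge_of_tendsto' hlim (strProb_le_strMass_extensions_add P hβ)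

lemma tsum_strMass_extensions_le (m : ℕ) :
    ∑' β : Tset D m, strMass P {α | α ∈ D ∧ β.1 <+: α} ≤
      strMass P {α | α ∈ D ∧ m < α.length} := by
  have hdisj : (Tset D m).PairwiseDisjoint fun β => {α | α ∈ D ∧ β <+: α} := by
    intro β₁ hβ₁ β₂ hβ₂ hne
    refine disjoint_left.mpr fun α ⟨_, h₁⟩ ⟨_, h₂⟩ => hne ?_
    exact (List.prefix_or_prefix_of_prefix h₁ h₂).elim
      (fun h => h.eq_of_length (hβ₁.1.trans hβ₂.1.symm))
      (fun h => (h.eq_of_length (hβ₂.1.trans hβ₁.1.symm)).symm)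
  have hsub : (⋃ β ∈ Tset D m, {α | α ∈ D ∧ β <+: α}) ⊆ {α | α ∈ D ∧ m < α.length} := by
    simp only [iUnion_subset_iff]
    rintro β ⟨hβm, hβT⟩ α ⟨hαD, hβα⟩
    refine ⟨hαD, hβm ▸ hβα.length_le.lt_of_ne fun hlen => ?_⟩
    exact hβT α hαD (hβα.eq_of_length hlen ▸ List.prefix_refl α)
  calc ∑' β : Tset D m, strMass P {α | α ∈ D ∧ β.1 <+: α}
      = strMass P (⋃ β ∈ Tset D m, {α | α ∈ D ∧ β <+: α}) :=
        (ENNReal.tsum_biUnion' hdisj).symm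
    _ ≤ strMass P {α | α ∈ D ∧ m < α.length} := strMass_mono P hsub

lemma strMass_Dperp_le (hasc : IsASC P D) (m : ℕ) :
    strMass P (Dperp D m) ≤ strMass P {α | α ∈ D ∧ m ≤ α.length} := by
  have hsplit : {α | α ∈ D ∧ α.length = m} ∪ {α | α ∈ D ∧ m < α.length} =
      {α | α ∈ D ∧ m ≤ α.length} := by
    ext α
    simp only [mem_union, mem_ofPred_eq, ← and_or_left]
    exact and_congr_right fun _ => by omega
  have hdisj : Disjoint {α | α ∈ D ∧ α.length = m} {α | α ∈ D ∧ m < α.length} :=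
    disjoint_left.mpr fun α ⟨_, h₁⟩ ⟨_, h₂⟩ => by omega
  calc strMass P (Dperp D m)
      ≤ strMass P {α | α ∈ D ∧ α.length = m} + ∑' β : Tset D m, strProb P β :=
        strMass_union_le P _ _
    _ ≤ strMass P {α | α ∈ D ∧ α.length = m} +
          ∑' β : Tset D m, strMass P {α | α ∈ D ∧ β.1 <+: α} := by
        gcongr with β
        exact strProb_le_strMass_extensions P hasc β.2
    _ ≤ strMass P {α | α ∈ D ∧ α.length = m} + strMass P {α | α ∈ D ∧ m < α.length} := by
        gcongr
        exact tsum_strMass_extensions_le P m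
    _ = strMass P {α | α ∈ D ∧ m ≤ α.length} := by rw [← strMass_union P hdisj, hsplit]

end Dictionary

section AverageLength

variable {A : Type*} (P : PMF A) {E : Set (List A)} {m : ℕ}

lemma avgLen_eq_strMass_mul (h : ∀ α ∈ E, α.length = m) : avgLen P E = strMass P E * m := by
  rw [strMass, ← ENNReal.tsum_mul_right]
  exact tsum_congr fun α => by rw [h α α.2]

lemma strMass_mul_le_avgLen (h : ∀ α ∈ E, m ≤ α.length) : strMass P E * m ≤ avgLen P E := by
  rw [strMass, ← ENNReal.tsum_mul_right]
  exact ENNReal.tsum_le_tsum fun α => by gcongr; exact h α α.2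

end AverageLength

lemma length_of_mem_Dperp {A : Type*} {D : Set (List A)} {m : ℕ} {α : List A}
    (h : α ∈ Dperp D m) : α.length = m := by
  rcases h with ⟨_, h⟩ | ⟨h, _⟩ <;> exact h

theorem avgLen_Dperp_le_general {A : Type*} (P : PMF A)
    (D : Set (List A)) (hasc : IsASC P D) (m : ℕ) :
    avgLen P (Dperp D m) ≤ avgLen P {α ∈ D | m ≤ α.length} :=
  calc avgLen P (Dperp D m) = strMass P (Dperp D m) * m :=
        avgLen_eq_strMass_mul P fun _ => length_of_mem_Dperp
    _ ≤ strMass P {α | α ∈ D ∧ m ≤ α.length} * m := by gcongr; exact strMass_Dperp_le P hasc m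
    _ ≤ avgLen P {α ∈ D | m ≤ α.length} := strMass_mul_le_avgLen P fun _ h => h.2

/-- If `D` is proper and almost surely complete then, for
every positive integer `m`,
`∑_{α∈D, |α|≥m} P(α)|α| ≥ ∑_{β ∈ D_m^⊥} P(β)|β|`. -/
theorem avgLen_Dperp_le {A : Type*} [Countable A] (P : PMF A)
    (D : Set (List A)) (hdict : IsDictionary D) (hprop : IsProper D)
    (hasc : IsASC P D) (m : ℕ) (hm : 0 < m) :
    avgLen P (Dperp D m) ≤ avgLen P {α ∈ D | m ≤ α.length} :=
  avgLen_Dperp_le_general P D hasc m
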